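/- (The Poisson structure is a Lie algebra anti-homomorphism.) For all α, β ∈ 𝒜ⁿ and every i ∈ {1,…,n}, one has η^{ik} ∂_x({α,β}_k) = −[Pα, Pβ]^i in 𝒜, where (Pα)^i := η^{il}∂_x α_l and the commutator of evolutionary vector fields with components ξ = (ξ^i), ζ = (ζ^i) ∈ 𝒜ⁿ is [ξ,ζ]^p := Σ_{i,s≥0} (∂_x^s ξ^i)(∂ζ^p/∂u^i_{(s)}) − (∂_x^s ζ^i)(∂ξ^p/∂u^i_{(s)}). Hence P{α,β} = −[Pα, Pβ], i.e., P is an anti-homomorphism from the Lie algebra of 1-forms with the Poisson bracket to the Lie algebra of evolutionary vector fields with the Lie bracket. -/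
import Mathlib


open Finset

/-- An abstract model of the ring `𝒜` of differential polynomials in the formal
variables `u^i_{(s)}` (`i = 1,…,n`, `s ≥ 0`, `u^i_{(0)} = u^i`): a commutative
`ℝ`-algebra `A` equipped with the variables `u (i,s)`, the partial derivatives
`pd (i,s) = ∂/∂u^i_{(s)}` (commuting `ℝ`-linear derivations with
`∂u^j_{(t)}/∂u^i_{(s)} = δ`), a finiteness witness `supp f` (each `f` depends on
finitely many of the variables), and the total `x`-derivative
`∂_x f = Σ_{i,s} u^i_{(s+1)} ∂f/∂u^i_{(s)}` (a finite sum on each `f`). -/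
structure DiffPolyAlg (n : ℕ) (A : Type*) [CommRing A] [Algebra ℝ A] where
  u : Fin n × ℕ → A
  pd : Fin n × ℕ → A → A
  pd_add : ∀ v f g, pd v (f + g) = pd v f + pd v g
  pd_smul : ∀ v (r : ℝ) f, pd v (r • f) = r • pd v f
  pd_mul : ∀ v f g, pd v (f * g) = pd v f * g + f * pd v g
  pd_u : ∀ v w, pd v (u w) = if v = w then 1 else 0
  pd_comm : ∀ v w f, pd v (pd w f) = pd w (pd v f)
  supp : A → Finset (Fin n × ℕ)
  pd_eq_zero : ∀ f v, v ∉ supp f → pd v f = 0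
  Dx : A → A
  Dx_add : ∀ f g, Dx (f + g) = Dx f + Dx g
  Dx_smul : ∀ (r : ℝ) f, Dx (r • f) = r • Dx f
  Dx_mul : ∀ f g, Dx (f * g) = Dx f * g + f * Dx g
  Dx_spec : ∀ f, ∀ S : Finset (Fin n × ℕ), supp f ⊆ S →
      Dx f = ∑ v ∈ S, u (v.1, v.2 + 1) * pd v f

namespace DiffPolyAlg

variable {n : ℕ} {A : Type*} [CommRing A] [Algebra ℝ A]

/-- The finite set of orders `s` such that `∂f/∂u^i_{(s)}` can be nonzero;
sums `Σ_s` below are taken over this set. -/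
def sset (D : DiffPolyAlg n A) (f : A) (i : Fin n) : Finset ℕ :=
  ((D.supp f).filter fun v => v.1 = i).image Prod.snd

/-- The components `{α,β}_i = Σ_{k,l,s} η^{kl} [ (∂_x^{s+1}β_l)(∂α_i/∂u^k_{(s)})
− (∂_x^{s+1}α_l)(∂β_i/∂u^k_{(s)}) ]` of the Poisson bracket of two reduced
1-forms in flat coordinates (the sum over the pairs `(k,s)` is restricted to the
finite set where the partial derivatives can be nonzero). -/
def pbracket (D : DiffPolyAlg n A) (η : Fin n → Fin n → ℝ)
    (α β : Fin n → A) : Fin n → A := fun i =>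
  (∑ v ∈ D.supp (α i), ∑ l, η v.1 l • (D.Dx^[v.2 + 1] (β l) * D.pd v (α i)))
    - ∑ v ∈ D.supp (β i), ∑ l, η v.1 l • (D.Dx^[v.2 + 1] (α l) * D.pd v (β i))

end DiffPolyAlg

namespace DiffPolyAlg

variable {n : ℕ} {A : Type*} [CommRing A] [Algebra ℝ A]

/-- The commutator `[ξ,ζ]^p = Σ_{i,s} (∂_x^s ξ^i)(∂ζ^p/∂u^i_{(s)}) −
(∂_x^s ζ^i)(∂ξ^p/∂u^i_{(s)})` of two evolutionary vector fields with components
`ξ, ζ ∈ 𝒜ⁿ` (the sum over `(i,s)` is restricted to the finite set where the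
partial derivatives can be nonzero). -/
def evComm (D : DiffPolyAlg n A) (ξ ζ : Fin n → A) : Fin n → A := fun p =>
  ∑ v ∈ D.supp (ζ p) ∪ D.supp (ξ p),
    (D.Dx^[v.2] (ξ v.1) * D.pd v (ζ p) - D.Dx^[v.2] (ζ v.1) * D.pd v (ξ p))

end DiffPolyAlg

namespace DiffPolyAlg

variable {n : ℕ} {A : Type*} [CommRing A] [Algebra ℝ A] (D : DiffPolyAlg n A)

lemma pd_zero' (v : Fin n × ℕ) : D.pd v (0 : A) = 0 := by
  simpa using D.pd_smul v 0 0

lemma Dx_zero' : D.Dx (0 : A) = 0 := by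
  simpa using D.Dx_smul 0 0

lemma Dx_sub (f g : A) : D.Dx (f - g) = D.Dx f - D.Dx g := by
  have h := D.Dx_add (f - g) g
  rw [sub_add_cancel] at h
  rw [h]; ring

lemma pd_sum {ι : Type*} (v : Fin n × ℕ) (s : Finset ι) (g : ι → A) :
    D.pd v (∑ i ∈ s, g i) = ∑ i ∈ s, D.pd v (g i) := by
  classical
  induction s using Finset.cons_induction with
  | empty => simp [D.pd_zero']
  | cons a s ha ih => rw [Finset.sum_cons, Finset.sum_cons, D.pd_add, ih]

lemma Dx_sum {ι : Type*} (s : Finset ι) (g : ι → A) :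
    D.Dx (∑ i ∈ s, g i) = ∑ i ∈ s, D.Dx (g i) := by
  classical
  induction s using Finset.cons_induction with
  | empty => simp [D.Dx_zero']
  | cons a s ha ih => rw [Finset.sum_cons, Finset.sum_cons, D.Dx_add, ih]

lemma DxIter_add (m : ℕ) (f g : A) :
    D.Dx^[m] (f + g) = D.Dx^[m] f + D.Dx^[m] g := by
  induction m with
  | zero => simp
  | succ m ih => simp only [Function.iterate_succ_apply', ih, D.Dx_add]

lemma DxIter_smul (m : ℕ) (r : ℝ) (f : A) :
    D.Dx^[m] (r • f) = r • D.Dx^[m] f := by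
  induction m with
  | zero => simp
  | succ m ih => simp only [Function.iterate_succ_apply', ih, D.Dx_smul]

lemma DxIter_zero' (m : ℕ) : D.Dx^[m] (0 : A) = 0 := by
  simpa using D.DxIter_smul m 0 0

lemma DxIter_sum (m : ℕ) {ι : Type*} (s : Finset ι) (g : ι → A) :
    D.Dx^[m] (∑ i ∈ s, g i) = ∑ i ∈ s, D.Dx^[m] (g i) := by
  classical
  induction s using Finset.cons_induction with
  | empty => simp [D.DxIter_zero']
  | cons a s ha ih => rw [Finset.sum_cons, Finset.sum_cons, D.DxIter_add, ih]

/-- Directional derivative along an evolutionary vector field. -/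
def ev (ξ : Fin n → A) (f : A) : A :=
  ∑ v ∈ D.supp f, D.Dx^[v.2] (ξ v.1) * D.pd v f

lemma ev_super (ξ : Fin n → A) (f : A) {S : Finset (Fin n × ℕ)}
    (hS : D.supp f ⊆ S) :
    D.ev ξ f = ∑ v ∈ S, D.Dx^[v.2] (ξ v.1) * D.pd v f :=
  Finset.sum_subset hS (fun v _ hv => by rw [D.pd_eq_zero f v hv, mul_zero])

lemma ev_add (ξ : Fin n → A) (f g : A) :
    D.ev ξ (f + g) = D.ev ξ f + D.ev ξ g := by
  classical
  set S := D.supp (f + g) ∪ D.supp f ∪ D.supp g with hS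
  rw [D.ev_super ξ (f + g) (S := S) (fun v hv => by simp [hS, hv]),
      D.ev_super ξ f (S := S) (fun v hv => by simp [hS, hv]),
      D.ev_super ξ g (S := S) (fun v hv => by simp [hS, hv]),
      ← Finset.sum_add_distrib]
  refine Finset.sum_congr rfl fun v _ => ?_
  rw [D.pd_add, mul_add]

lemma ev_smul (ξ : Fin n → A) (r : ℝ) (f : A) :
    D.ev ξ (r • f) = r • D.ev ξ f := by
  classical
  set S := D.supp (r • f) ∪ D.supp f with hS
  rw [D.ev_super ξ (r • f) (S := S) (fun v hv => by simp [hS, hv]),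
      D.ev_super ξ f (S := S) (fun v hv => by simp [hS, hv]),
      Finset.smul_sum]
  refine Finset.sum_congr rfl fun v _ => ?_
  rw [D.pd_smul, mul_smul_comm]

lemma ev_zero (ξ : Fin n → A) : D.ev ξ (0 : A) = 0 := by
  simpa using D.ev_smul ξ 0 0

lemma ev_sum (ξ : Fin n → A) {ι : Type*} (s : Finset ι) (g : ι → A) :
    D.ev ξ (∑ i ∈ s, g i) = ∑ i ∈ s, D.ev ξ (g i) := by
  classical
  induction s using Finset.cons_induction with
  | empty => simp [D.ev_zero]
  | cons a s ha ih => rw [Finset.sum_cons, Finset.sum_cons, D.ev_add, ih]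

/-- Shift term in the commutation of `pd` with `Dx`. -/
def sh (f : A) : Fin n × ℕ → A := fun w =>
  if w.2 = 0 then 0 else D.pd (w.1, w.2 - 1) f

lemma pd_Dx (w : Fin n × ℕ) (f : A) :
    D.pd w (D.Dx f) = D.Dx (D.pd w f) + D.sh f w := by
  classical
  obtain ⟨k, s⟩ := w
  set S : Finset (Fin n × ℕ) :=
    insert (k, s - 1) (D.supp f ∪ D.supp (D.pd (k, s) f)) with hSdef
  have hfS : D.supp f ⊆ S := fun v hv => by simp [hSdef, hv]
  have hpS : D.supp (D.pd (k, s) f) ⊆ S := fun v hv => by simp [hSdef, hv]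
  rw [D.Dx_spec f S hfS, D.pd_sum]
  have hterm : ∀ v ∈ S,
      D.pd (k, s) (D.u (v.1, v.2 + 1) * D.pd v f)
        = (if ((k : Fin n), s) = (v.1, v.2 + 1) then 1 else 0) * D.pd v f
          + D.u (v.1, v.2 + 1) * D.pd v (D.pd (k, s) f) := by
    intro v _
    rw [D.pd_mul, D.pd_u, D.pd_comm]
  rw [Finset.sum_congr rfl hterm, Finset.sum_add_distrib,
      ← D.Dx_spec (D.pd (k, s) f) S hpS, add_comm]
  congr 1
  cases s with
  | zero => simp [sh]
  | succ t =>
    have hstep : ∀ v ∈ S,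
        (if ((k : Fin n), t + 1) = (v.1, v.2 + 1) then (1 : A) else 0) * D.pd v f
          = if v = (k, t) then D.pd v f else 0 := by
      intro v _
      by_cases h : v = (k, t)
      · subst h; simp
      · have hne : ¬ (((k : Fin n), t + 1) = (v.1, v.2 + 1)) := by
          intro hh
          apply h
          have h1 : v.1 = k := (Prod.ext_iff.mp hh).1.symm
          have h2 : v.2 = t := by
            have := (Prod.ext_iff.mp hh).2
            omega
          exact Prod.ext h1 h2
        simp [hne, h]
    rw [Finset.sum_congr rfl hstep, Finset.sum_ite_eq' S ((k : Fin n), t)]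
    have hmem : ((k : Fin n), t) ∈ S := by simp [hSdef]
    simp [hmem, sh]

/-- Evolutionary vector fields commute with the total derivative. -/
lemma ev_Dx (ξ : Fin n → A) (f : A) :
    D.ev ξ (D.Dx f) = D.Dx (D.ev ξ f) := by
  classical
  set T := D.supp f with hT
  set T' := T.image (fun v : Fin n × ℕ => (v.1, v.2 + 1)) with hT'
  set S := D.supp (D.Dx f) ∪ T ∪ T' with hSdef
  have hTS : T ⊆ S := fun v hv => by simp [hSdef, hv]
  have hT'S : T' ⊆ S := fun v hv => by simp [hSdef, hv]
  rw [D.ev_super ξ (D.Dx f) (S := S) (fun v hv => by simp [hSdef, hv])]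
  have step : ∀ w ∈ S, D.Dx^[w.2] (ξ w.1) * D.pd w (D.Dx f)
      = D.Dx^[w.2] (ξ w.1) * D.Dx (D.pd w f)
        + D.Dx^[w.2] (ξ w.1) * D.sh f w := by
    intro w _; rw [D.pd_Dx, mul_add]
  rw [Finset.sum_congr rfl step, Finset.sum_add_distrib]
  rw [show D.ev ξ f = ∑ v ∈ T, D.Dx^[v.2] (ξ v.1) * D.pd v f from rfl, D.Dx_sum]
  have rhs : ∀ w ∈ T, D.Dx (D.Dx^[w.2] (ξ w.1) * D.pd w f)
      = D.Dx^[w.2] (ξ w.1) * D.Dx (D.pd w f)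
        + D.Dx^[w.2 + 1] (ξ w.1) * D.pd w f := by
    intro w _
    rw [D.Dx_mul, Function.iterate_succ_apply']
    ring
  rw [Finset.sum_congr rfl rhs, Finset.sum_add_distrib]
  congr 1
  · exact (Finset.sum_subset hTS (fun w _ hw => by
      rw [D.pd_eq_zero f w hw, D.Dx_zero', mul_zero])).symm
  · have h1 : ∑ w ∈ S, D.Dx^[w.2] (ξ w.1) * D.sh f w
        = ∑ w ∈ T', D.Dx^[w.2] (ξ w.1) * D.sh f w := by
      refine (Finset.sum_subset hT'S (fun w _ hw => ?_)).symm
      rcases w with ⟨a, b⟩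
      cases b with
      | zero => simp [sh]
      | succ t =>
        have hnot : (a, t) ∉ T := fun hmem =>
          hw (Finset.mem_image.mpr ⟨(a, t), hmem, rfl⟩)
        simp [sh, D.pd_eq_zero f (a, t) hnot]
    have einj : ∀ v ∈ T, ∀ w ∈ T,
        (fun v : Fin n × ℕ => (v.1, v.2 + 1)) v
          = (fun v : Fin n × ℕ => (v.1, v.2 + 1)) w → v = w := by
      intro v _ w _ h
      have h' : (v.1, v.2 + 1) = (w.1, w.2 + 1) := h
      have h1 := (Prod.ext_iff.mp h').1
      have h2 := (Prod.ext_iff.mp h').2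
      exact Prod.ext h1 (by omega)
    rw [h1, hT', Finset.sum_image einj]
    refine Finset.sum_congr rfl fun v _ => ?_
    simp [sh]

lemma pbracket_eq (η : Fin n → Fin n → ℝ) (α β : Fin n → A) (i : Fin n) :
    D.pbracket η α β i
      = D.ev (fun j => ∑ l, η j l • D.Dx (β l)) (α i)
        - D.ev (fun j => ∑ l, η j l • D.Dx (α l)) (β i) := by
  have key : ∀ γ δ : Fin n → A,
      D.ev (fun j => ∑ l, η j l • D.Dx (δ l)) (γ i)
        = ∑ v ∈ D.supp (γ i), ∑ l,
            η v.1 l • (D.Dx^[v.2 + 1] (δ l) * D.pd v (γ i)) := by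
    intro γ δ
    refine Finset.sum_congr rfl fun v _ => ?_
    rw [D.DxIter_sum, Finset.sum_mul]
    refine Finset.sum_congr rfl fun l _ => ?_
    rw [D.DxIter_smul, smul_mul_assoc, ← Function.iterate_succ_apply]
  rw [pbracket, key α β, key β α]

lemma evComm_eq (ξ ζ : Fin n → A) (p : Fin n) :
    D.evComm ξ ζ p = D.ev ξ (ζ p) - D.ev ζ (ξ p) := by
  classical
  rw [evComm, Finset.sum_sub_distrib,
      ← D.ev_super ξ (ζ p) Finset.subset_union_left,
      ← D.ev_super ζ (ξ p) Finset.subset_union_right]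

end DiffPolyAlg

/-- **the Poisson structure is a Lie algebra
anti-homomorphism.** For all `α, β ∈ 𝒜ⁿ` and every `i`, one has
`η^{ik} ∂_x({α,β}_k) = −[Pα, Pβ]^i` in `𝒜`, where `(Pα)^i := η^{il}∂_x α_l`.
Hence `P{α,β} = −[Pα, Pβ]`, i.e. `P` is an anti-homomorphism from the Lie
algebra of 1-forms with the Poisson bracket to the Lie algebra of evolutionary
vector fields with the Lie bracket. -/
theorem poisson_anti_homomorphism {n : ℕ} (hn : 1 ≤ n) {A : Type*} [CommRing A]
    [Algebra ℝ A] (D : DiffPolyAlg n A)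
    (η : Fin n → Fin n → ℝ) (hη_symm : ∀ k l, η k l = η l k)
    (η' : Fin n → Fin n → ℝ)
    (hη_nondeg : ∀ i j, ∑ k, η i k * η' k j = if i = j then (1 : ℝ) else 0)
    (α β : Fin n → A) (i : Fin n) :
    ∑ k, η i k • D.Dx (D.pbracket η α β k) =
      -DiffPolyAlg.evComm D
        (fun j => ∑ l, η j l • D.Dx (α l))
        (fun j => ∑ l, η j l • D.Dx (β l)) i := by
  classical
  set Pα : Fin n → A := fun j => ∑ l, η j l • D.Dx (α l) with hPα
  set Pβ : Fin n → A := fun j => ∑ l, η j l • D.Dx (β l) with hPβ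
  have lhs : ∀ k, D.Dx (D.pbracket η α β k)
      = D.ev Pβ (D.Dx (α k)) - D.ev Pα (D.Dx (β k)) := by
    intro k
    rw [D.pbracket_eq, D.Dx_sub, D.ev_Dx, D.ev_Dx]
  calc ∑ k, η i k • D.Dx (D.pbracket η α β k)
      = ∑ k, (η i k • D.ev Pβ (D.Dx (α k)) - η i k • D.ev Pα (D.Dx (β k))) := by
        refine Finset.sum_congr rfl fun k _ => ?_
        rw [lhs k, smul_sub]
    _ = D.ev Pβ (Pα i) - D.ev Pα (Pβ i) := by
        rw [Finset.sum_sub_distrib]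
        simp only [hPα, hPβ]
        congr 1
        · rw [D.ev_sum]
          exact Finset.sum_congr rfl fun k _ => (D.ev_smul _ _ _).symm
        · rw [D.ev_sum]
          exact Finset.sum_congr rfl fun k _ => (D.ev_smul _ _ _).symm
    _ = -D.evComm Pα Pβ i := by rw [D.evComm_eq]; ring
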